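/- arXiv:2507.13051 — 2 statements merged into one kernel-verified Lean document; each statement's English description precedes it below -/
import Mathlib

section
/- Let A = !![a₁,a₂,a₃; b₁,b₂,b₃; c₁,c₂,c₃] be a real 3×3 matrix with det A ≠ 0. Let (xᵢ,yᵢ,pᵢ,qᵢ) ∈ ℝ⁴ for i = 1,2,3,4 with hᵢ := c₁xᵢ+c₂yᵢ+c₃ ≠ 0, and let (x̃ᵢ,ỹᵢ,p̃ᵢ,q̃ᵢ) be the prolonged transform: (x̃ᵢ,ỹᵢ) := ((a₁xᵢ+a₂yᵢ+a₃)/hᵢ, (b₁xᵢ+b₂yᵢ+b₃)/hᵢ) and (p̃ᵢ,q̃ᵢ) the first two components of hᵢ·ℓᵢA⁻¹, where ℓᵢ := (pᵢ, qᵢ, −pᵢxᵢ−qᵢyᵢ). Then the quantity σ := δ₁₂₃δ₁₂₄δ₁₃₄δ₂₃₄ · Δ₁₂₃Δ₁₂₄Δ₁₃₄Δ₂₃₄ is an absolute invariant: σ̃, computed from the transformed data, equals σ. -/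
open Matrix

/-- The gradient line `ℓ = (p, q, -p*x - q*y)` of the data `(x, y, p, q)`. -/
noncomputable def gradLine (x y p q : ℝ) : Fin 3 → ℝ := ![p, q, -(p * x) - q * y]

/-- Determinant of the 3×3 matrix with rows `v₁, v₂, v₃`. -/
noncomputable def det3 (v₁ v₂ v₃ : Fin 3 → ℝ) : ℝ := Matrix.det (Matrix.of ![v₁, v₂, v₃])

/-
A projective map acts on homogeneous points by `Aᵢ ↦ hᵢ⁻¹ • A Aᵢ` and on their gradient lines
contragrediently, `ℓᵢ ↦ hᵢ • ℓᵢ A⁻¹`; the third coordinate of the transformed line is forced by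
incidence with the transformed point, which is preserved. Hence for every triple
`δ̃ᵢⱼₖ = det A · δᵢⱼₖ / (hᵢhⱼhₖ)` and `Δ̃ᵢⱼₖ = hᵢhⱼhₖ · Δᵢⱼₖ / det A`, so already each product
`δᵢⱼₖ Δᵢⱼₖ` is invariant, and `σ` is the product of four of them.
-/

lemma det3_smul (s₁ s₂ s₃ : ℝ) (v₁ v₂ v₃ : Fin 3 → ℝ) :
    det3 (s₁ • v₁) (s₂ • v₂) (s₃ • v₃) = s₁ * s₂ * s₃ * det3 v₁ v₂ v₃ := by
  simp only [det3, det_fin_three, of_apply, cons_val', Pi.smul_apply, smul_eq_mul,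
    cons_val_fin_one, cons_val_zero, cons_val_one, cons_val]
  ring

lemma det3_vecMul (v₁ v₂ v₃ : Fin 3 → ℝ) (M : Matrix (Fin 3) (Fin 3) ℝ) :
    det3 (v₁ ᵥ* M) (v₂ ᵥ* M) (v₃ ᵥ* M) = det3 v₁ v₂ v₃ * M.det := by
  have h : of ![v₁ ᵥ* M, v₂ ᵥ* M, v₃ ᵥ* M] = of ![v₁, v₂, v₃] * M := by
    ext i j
    fin_cases i <;> rfl
  rw [det3, h, det_mul, det3]

lemma det3_mulVec (v₁ v₂ v₃ : Fin 3 → ℝ) (M : Matrix (Fin 3) (Fin 3) ℝ) :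
    det3 (M *ᵥ v₁) (M *ᵥ v₂) (M *ᵥ v₃) = M.det * det3 v₁ v₂ v₃ := by
  simp only [← vecMul_transpose, det3_vecMul, det_transpose, mul_comm]

lemma det_columns_eq_det3 (x₁ y₁ x₂ y₂ x₃ y₃ : ℝ) :
    det !![x₁, x₂, x₃; y₁, y₂, y₃; 1, 1, 1] = det3 ![x₁, y₁, 1] ![x₂, y₂, 1] ![x₃, y₃, 1] := by
  simp only [det3, det_fin_three, of_apply, cons_val', cons_val_zero, cons_val_fin_one,
    cons_val_one, cons_val, mul_one, one_mul]
  ring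

section Triple

variable {A : Matrix (Fin 3) (Fin 3) ℝ} {h₁ h₂ h₃ : ℝ} {u₁ u₂ u₃ ũ₁ ũ₂ ũ₃ : Fin 3 → ℝ}

lemma mul_det3_of_smul_eq_mulVec (hu₁ : h₁ • ũ₁ = A *ᵥ u₁) (hu₂ : h₂ • ũ₂ = A *ᵥ u₂)
    (hu₃ : h₃ • ũ₃ = A *ᵥ u₃) :
    h₁ * h₂ * h₃ * det3 ũ₁ ũ₂ ũ₃ = A.det * det3 u₁ u₂ u₃ := by
  rw [← det3_smul, hu₁, hu₂, hu₃, det3_mulVec]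

lemma det3_mul_det3_of_contragredient (hA : IsUnit A.det) (hu₁ : h₁ • ũ₁ = A *ᵥ u₁)
    (hu₂ : h₂ • ũ₂ = A *ᵥ u₂) (hu₃ : h₃ • ũ₃ = A *ᵥ u₃) (ℓ₁ ℓ₂ ℓ₃ : Fin 3 → ℝ) :
    det3 ũ₁ ũ₂ ũ₃ * det3 (h₁ • (ℓ₁ ᵥ* A⁻¹)) (h₂ • (ℓ₂ ᵥ* A⁻¹)) (h₃ • (ℓ₃ ᵥ* A⁻¹))
      = det3 u₁ u₂ u₃ * det3 ℓ₁ ℓ₂ ℓ₃ := by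
  have hδ := mul_det3_of_smul_eq_mulVec hu₁ hu₂ hu₃
  have hdet : A.det * A⁻¹.det = 1 := by
    rw [← det_mul, mul_nonsing_inv A hA, det_one]
  rw [det3_smul, det3_vecMul]
  linear_combination (det3 ℓ₁ ℓ₂ ℓ₃ * A⁻¹.det) * hδ + det3 u₁ u₂ u₃ * det3 ℓ₁ ℓ₂ ℓ₃ * hdet

end Triple

lemma gradLine_dotProduct (x y p q : ℝ) : gradLine x y p q ⬝ᵥ ![x, y, 1] = 0 := by
  simp [gradLine, dotProduct, Fin.sum_univ_three]

lemma gradLine_eq_of_dotProduct_eq_zero {x y : ℝ} {w : Fin 3 → ℝ}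
    (hw : w ⬝ᵥ ![x, y, 1] = 0) : gradLine x y (w 0) (w 1) = w := by
  simp only [dotProduct, Fin.sum_univ_three, cons_val_zero, cons_val_one, cons_val_two,
    head_cons, tail_cons, mul_one] at hw
  ext i
  fin_cases i
  · rfl
  · rfl
  · show -(w 0 * x) - w 1 * y = w 2
    linear_combination -hw

lemma smul_vecMul_inv_dotProduct {A : Matrix (Fin 3) (Fin 3) ℝ} (hA : IsUnit A.det) {h : ℝ}
    {u ũ : Fin 3 → ℝ} (hu : h • ũ = A *ᵥ u) (ℓ : Fin 3 → ℝ) :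
    (h • (ℓ ᵥ* A⁻¹)) ⬝ᵥ ũ = ℓ ⬝ᵥ u := by
  rw [smul_dotProduct, ← dotProduct_smul, hu, dotProduct_mulVec, vecMul_vecMul,
    nonsing_inv_mul A hA, vecMul_one]

lemma smul_homog_eq_mulVec (a1 a2 a3 b1 b2 b3 c1 c2 c3 x y : ℝ)
    (hh : c1 * x + c2 * y + c3 ≠ 0) :
    (c1 * x + c2 * y + c3) • ![(a1 * x + a2 * y + a3) / (c1 * x + c2 * y + c3),
      (b1 * x + b2 * y + b3) / (c1 * x + c2 * y + c3), 1]
      = !![a1, a2, a3; b1, b2, b3; c1, c2, c3] *ᵥ ![x, y, 1] := by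
  ext i
  fin_cases i <;>
    simp [mulVec, dotProduct, Fin.sum_univ_three, mul_div_cancel₀ _ hh]

lemma prolonged_transform {a1 a2 a3 b1 b2 b3 c1 c2 c3 : ℝ}
    (hD : det !![a1, a2, a3; b1, b2, b3; c1, c2, c3] ≠ 0) {x y p q xt yt pt qt : ℝ}
    (hh : c1 * x + c2 * y + c3 ≠ 0)
    (hxt : xt = (a1 * x + a2 * y + a3) / (c1 * x + c2 * y + c3))
    (hyt : yt = (b1 * x + b2 * y + b3) / (c1 * x + c2 * y + c3))
    (hpt : pt = ((c1 * x + c2 * y + c3) •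
      gradLine x y p q ᵥ* (!![a1, a2, a3; b1, b2, b3; c1, c2, c3])⁻¹) 0)
    (hqt : qt = ((c1 * x + c2 * y + c3) •
      gradLine x y p q ᵥ* (!![a1, a2, a3; b1, b2, b3; c1, c2, c3])⁻¹) 1) :
    (c1 * x + c2 * y + c3) • ![xt, yt, 1] = !![a1, a2, a3; b1, b2, b3; c1, c2, c3] *ᵥ ![x, y, 1] ∧
      gradLine xt yt pt qt = (c1 * x + c2 * y + c3) •
        (gradLine x y p q ᵥ* (!![a1, a2, a3; b1, b2, b3; c1, c2, c3])⁻¹) := by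
  have hu := smul_homog_eq_mulVec a1 a2 a3 b1 b2 b3 c1 c2 c3 x y hh
  rw [← hxt, ← hyt] at hu
  refine ⟨hu, ?_⟩
  rw [hpt, hqt]
  apply gradLine_eq_of_dotProduct_eq_zero
  rw [smul_vecMul_inv_dotProduct hD.isUnit hu, gradLine_dotProduct]

lemma mul_eq_of_pairwise_mul_eq {M : Type*} [CommMonoid M]
    {a b c d e f g h a' b' c' d' e' f' g' h' : M} (h₁ : a * e = a' * e') (h₂ : b * f = b' * f')
    (h₃ : c * g = c' * g') (h₄ : d * h = d' * h') :
    a * b * c * d * e * f * g * h = a' * b' * c' * d' * e' * f' * g' * h' := by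
  calc a * b * c * d * e * f * g * h = (a * e) * (b * f) * (c * g) * (d * h) := by ac_rfl
    _ = (a' * e') * (b' * f') * (c' * g') * (d' * h') := by rw [h₁, h₂, h₃, h₄]
    _ = a' * b' * c' * d' * e' * f' * g' * h' := by ac_rfl

theorem sigma_is_absolute_invariant
    (a1 a2 a3 b1 b2 b3 c1 c2 c3 : ℝ)
    (hD : Matrix.det !![a1, a2, a3; b1, b2, b3; c1, c2, c3] ≠ 0)
    (x1 y1 p1 q1 x2 y2 p2 q2 x3 y3 p3 q3 x4 y4 p4 q4 : ℝ)
    (hh1 : (c1 * x1 + c2 * y1 + c3) ≠ 0)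
    (hh2 : (c1 * x2 + c2 * y2 + c3) ≠ 0)
    (hh3 : (c1 * x3 + c2 * y3 + c3) ≠ 0)
    (hh4 : (c1 * x4 + c2 * y4 + c3) ≠ 0)
    (xt1 yt1 pt1 qt1 xt2 yt2 pt2 qt2 xt3 yt3 pt3 qt3 xt4 yt4 pt4 qt4 : ℝ)
    (hxt1 : xt1 = (a1 * x1 + a2 * y1 + a3) / (c1 * x1 + c2 * y1 + c3))
    (hyt1 : yt1 = (b1 * x1 + b2 * y1 + b3) / (c1 * x1 + c2 * y1 + c3))
    (hpt1 : pt1 = ((c1 * x1 + c2 * y1 + c3) • Matrix.vecMul (gradLine x1 y1 p1 q1) (!![a1, a2, a3; b1, b2, b3; c1, c2, c3])⁻¹) 0)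
    (hqt1 : qt1 = ((c1 * x1 + c2 * y1 + c3) • Matrix.vecMul (gradLine x1 y1 p1 q1) (!![a1, a2, a3; b1, b2, b3; c1, c2, c3])⁻¹) 1)
    (hxt2 : xt2 = (a1 * x2 + a2 * y2 + a3) / (c1 * x2 + c2 * y2 + c3))
    (hyt2 : yt2 = (b1 * x2 + b2 * y2 + b3) / (c1 * x2 + c2 * y2 + c3))
    (hpt2 : pt2 = ((c1 * x2 + c2 * y2 + c3) • Matrix.vecMul (gradLine x2 y2 p2 q2) (!![a1, a2, a3; b1, b2, b3; c1, c2, c3])⁻¹) 0)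
    (hqt2 : qt2 = ((c1 * x2 + c2 * y2 + c3) • Matrix.vecMul (gradLine x2 y2 p2 q2) (!![a1, a2, a3; b1, b2, b3; c1, c2, c3])⁻¹) 1)
    (hxt3 : xt3 = (a1 * x3 + a2 * y3 + a3) / (c1 * x3 + c2 * y3 + c3))
    (hyt3 : yt3 = (b1 * x3 + b2 * y3 + b3) / (c1 * x3 + c2 * y3 + c3))
    (hpt3 : pt3 = ((c1 * x3 + c2 * y3 + c3) • Matrix.vecMul (gradLine x3 y3 p3 q3) (!![a1, a2, a3; b1, b2, b3; c1, c2, c3])⁻¹) 0)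
    (hqt3 : qt3 = ((c1 * x3 + c2 * y3 + c3) • Matrix.vecMul (gradLine x3 y3 p3 q3) (!![a1, a2, a3; b1, b2, b3; c1, c2, c3])⁻¹) 1)
    (hxt4 : xt4 = (a1 * x4 + a2 * y4 + a3) / (c1 * x4 + c2 * y4 + c3))
    (hyt4 : yt4 = (b1 * x4 + b2 * y4 + b3) / (c1 * x4 + c2 * y4 + c3))
    (hpt4 : pt4 = ((c1 * x4 + c2 * y4 + c3) • Matrix.vecMul (gradLine x4 y4 p4 q4) (!![a1, a2, a3; b1, b2, b3; c1, c2, c3])⁻¹) 0)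
    (hqt4 : qt4 = ((c1 * x4 + c2 * y4 + c3) • Matrix.vecMul (gradLine x4 y4 p4 q4) (!![a1, a2, a3; b1, b2, b3; c1, c2, c3])⁻¹) 1) :
    Matrix.det !![xt1, xt2, xt3; yt1, yt2, yt3; 1, 1, 1] * Matrix.det !![xt1, xt2, xt4; yt1, yt2, yt4; 1, 1, 1] * Matrix.det !![xt1, xt3, xt4; yt1, yt3, yt4; 1, 1, 1] * Matrix.det !![xt2, xt3, xt4; yt2, yt3, yt4; 1, 1, 1] * (det3 (gradLine xt1 yt1 pt1 qt1) (gradLine xt2 yt2 pt2 qt2) (gradLine xt3 yt3 pt3 qt3)) * (det3 (gradLine xt1 yt1 pt1 qt1) (gradLine xt2 yt2 pt2 qt2) (gradLine xt4 yt4 pt4 qt4)) * (det3 (gradLine xt1 yt1 pt1 qt1) (gradLine xt3 yt3 pt3 qt3) (gradLine xt4 yt4 pt4 qt4)) * (det3 (gradLine xt2 yt2 pt2 qt2) (gradLine xt3 yt3 pt3 qt3) (gradLine xt4 yt4 pt4 qt4))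
      = Matrix.det !![x1, x2, x3; y1, y2, y3; 1, 1, 1] * Matrix.det !![x1, x2, x4; y1, y2, y4; 1, 1, 1] * Matrix.det !![x1, x3, x4; y1, y3, y4; 1, 1, 1] * Matrix.det !![x2, x3, x4; y2, y3, y4; 1, 1, 1] * (det3 (gradLine x1 y1 p1 q1) (gradLine x2 y2 p2 q2) (gradLine x3 y3 p3 q3)) * (det3 (gradLine x1 y1 p1 q1) (gradLine x2 y2 p2 q2) (gradLine x4 y4 p4 q4)) * (det3 (gradLine x1 y1 p1 q1) (gradLine x3 y3 p3 q3) (gradLine x4 y4 p4 q4)) * (det3 (gradLine x2 y2 p2 q2) (gradLine x3 y3 p3 q3) (gradLine x4 y4 p4 q4)) := by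
  have hA := hD.isUnit
  obtain ⟨hu1, hl1⟩ := prolonged_transform hD hh1 hxt1 hyt1 hpt1 hqt1
  obtain ⟨hu2, hl2⟩ := prolonged_transform hD hh2 hxt2 hyt2 hpt2 hqt2
  obtain ⟨hu3, hl3⟩ := prolonged_transform hD hh3 hxt3 hyt3 hpt3 hqt3
  obtain ⟨hu4, hl4⟩ := prolonged_transform hD hh4 hxt4 hyt4 hpt4 hqt4
  simp only [det_columns_eq_det3, hl1, hl2, hl3, hl4]
  exact mul_eq_of_pairwise_mul_eq
    (det3_mul_det3_of_contragredient hA hu1 hu2 hu3 _ _ _)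
    (det3_mul_det3_of_contragredient hA hu1 hu2 hu4 _ _ _)
    (det3_mul_det3_of_contragredient hA hu1 hu3 hu4 _ _ _)
    (det3_mul_det3_of_contragredient hA hu2 hu3 hu4 _ _ _)
end

section
/- Let n ≥ 3 and let A = !![a₁,a₂,a₃; b₁,b₂,b₃; c₁,c₂,c₃] be a real 3×3 matrix with D := det A ≠ 0. Let (xᵢ,yᵢ,pᵢ,qᵢ) ∈ ℝ⁴ for i = 1,…,n with hᵢ := c₁xᵢ+c₂yᵢ+c₃ ≠ 0, and suppose Δ_S ≠ 0 for every 3-element subset S ⊆ {1,…,n}. Let (x̃ᵢ,ỹᵢ,p̃ᵢ,q̃ᵢ) be the prolonged transform of the i-th data. For any family of integers (m_S), indexed by the 3-element subsets S, set eᵢ := Σ_{S ∋ i} m_S and m := Σ_S m_S. Then ∏_S Δ̃_S^{m_S} = (∏_{i=1}^n hᵢ^{eᵢ}) · D^{−m} · ∏_S Δ_S^{m_S} (integer powers). In particular, if eᵢ = k for all i, the product ∏_S Δ_S^{m_S} is a relative invariant of weight −k/3, i.e. D^m·∏_S Δ̃_S^{m_S} = (∏_{i=1}^n hᵢ^{k})·∏_S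 Δ_S^{m_S}. -/
open Matrix

/-- For a 3-element subset `S` of the index set, `Δ_S` is the determinant of the 3×3
matrix whose rows are the gradient lines of the points indexed by `S` (in increasing
order); for other `S` we set it to `0`. -/
noncomputable def DeltaS {n : ℕ} (x y p q : Fin n → ℝ) (S : Finset (Fin n)) : ℝ :=
  if h : S.card = 3 then
    Matrix.det (Matrix.of fun r : Fin 3 =>
      gradLine (x (S.orderIsoOfFin h r)) (y (S.orderIsoOfFin h r))
        (p (S.orderIsoOfFin h r)) (q (S.orderIsoOfFin h r)))
  else 0

/-- The set of all 3-element subsets of `Fin n`. -/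
def threeSubsets (n : ℕ) : Finset (Finset (Fin n)) :=
  Finset.univ.filter fun S => S.card = 3

lemma zpow_sum₀' {ι : Type*} (a : ℝ) (ha : a ≠ 0) (s : Finset ι) (f : ι → ℤ) :
    a ^ (∑ i ∈ s, f i) = ∏ i ∈ s, a ^ f i := by
  classical
  induction s using Finset.cons_induction with
  | empty => simp
  | cons i s hi ih => rw [Finset.sum_cons, Finset.prod_cons, zpow_add₀ ha, ih]

lemma gradLine_transform (a1 a2 a3 b1 b2 b3 c1 c2 c3 : ℝ)
    (hD : Matrix.det !![a1, a2, a3; b1, b2, b3; c1, c2, c3] ≠ 0)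
    (x y p q xt yt pt qt : ℝ)
    (hh : c1 * x + c2 * y + c3 ≠ 0)
    (hxt : xt = (a1 * x + a2 * y + a3) / (c1 * x + c2 * y + c3))
    (hyt : yt = (b1 * x + b2 * y + b3) / (c1 * x + c2 * y + c3))
    (hpt : pt = ((c1 * x + c2 * y + c3) •
      Matrix.vecMul (gradLine x y p q) (!![a1, a2, a3; b1, b2, b3; c1, c2, c3])⁻¹) 0)
    (hqt : qt = ((c1 * x + c2 * y + c3) •
      Matrix.vecMul (gradLine x y p q) (!![a1, a2, a3; b1, b2, b3; c1, c2, c3])⁻¹) 1) :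
    gradLine xt yt pt qt = (c1 * x + c2 * y + c3) •
      Matrix.vecMul (gradLine x y p q) (!![a1, a2, a3; b1, b2, b3; c1, c2, c3])⁻¹ := by
  set A := !![a1, a2, a3; b1, b2, b3; c1, c2, c3] with hAdef
  set u := Matrix.vecMul (gradLine x y p q) A⁻¹ with hu
  have hA : IsUnit A.det := isUnit_iff_ne_zero.mpr hD
  have hback : Matrix.vecMul u A = gradLine x y p q := by
    rw [hu, Matrix.vecMul_vecMul, Matrix.nonsing_inv_mul A hA, Matrix.vecMul_one]
  have e0 := congrFun hback 0
  have e1 := congrFun hback 1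
  have e2 := congrFun hback 2
  simp [Matrix.vecMul, dotProduct, Fin.sum_univ_three, hAdef, gradLine] at e0 e1 e2
  funext r
  fin_cases r
  · simpa [gradLine] using hpt
  · simpa [gradLine] using hqt
  · simp only [gradLine, Matrix.cons_val_two, Matrix.tail_cons, Matrix.head_cons,
      Pi.smul_apply, smul_eq_mul, Matrix.cons_val_zero, Matrix.cons_val_one] at hpt hqt ⊢
    show -(pt * xt) - qt * yt = (c1 * x + c2 * y + c3) * u 2
    rw [hpt, hqt, hxt, hyt]
    have hmul : ∀ t s : ℝ, (c1*x+c2*y+c3) * t * (s / (c1*x+c2*y+c3)) = t * s := by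
      intro t s
      field_simp
    rw [hmul, hmul]
    linear_combination (-x) * e0 + (-y) * e1 - e2

/-- Transformation law for products `∏_S Δ_S^{m_S}` over all 3-element subsets, under
the prolonged projective action; in particular if `eᵢ = k` for all `i`, the product is
a relative invariant of weight `−k/3`. -/
theorem product_of_Deltas_transformation (n : ℕ) (hn : 3 ≤ n)
    (a1 a2 a3 b1 b2 b3 c1 c2 c3 : ℝ)
    (hD : Matrix.det !![a1, a2, a3; b1, b2, b3; c1, c2, c3] ≠ 0)
    (x y p q : Fin n → ℝ)
    (hh : ∀ i, c1 * x i + c2 * y i + c3 ≠ 0)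
    (hΔ : ∀ S : Finset (Fin n), S.card = 3 → DeltaS x y p q S ≠ 0)
    (xt yt pt qt : Fin n → ℝ)
    (hxt : ∀ i, xt i = (a1 * x i + a2 * y i + a3) / (c1 * x i + c2 * y i + c3))
    (hyt : ∀ i, yt i = (b1 * x i + b2 * y i + b3) / (c1 * x i + c2 * y i + c3))
    (hpt : ∀ i, pt i = ((c1 * x i + c2 * y i + c3) •
      Matrix.vecMul (gradLine (x i) (y i) (p i) (q i))
        (!![a1, a2, a3; b1, b2, b3; c1, c2, c3])⁻¹) 0)
    (hqt : ∀ i, qt i = ((c1 * x i + c2 * y i + c3) •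
      Matrix.vecMul (gradLine (x i) (y i) (p i) (q i))
        (!![a1, a2, a3; b1, b2, b3; c1, c2, c3])⁻¹) 1)
    (m : Finset (Fin n) → ℤ) :
    (∏ S ∈ threeSubsets n, DeltaS xt yt pt qt S ^ m S)
      = (∏ i : Fin n, (c1 * x i + c2 * y i + c3) ^
            (∑ S ∈ (threeSubsets n).filter (fun S => i ∈ S), m S)) *
        Matrix.det !![a1, a2, a3; b1, b2, b3; c1, c2, c3] ^ (-(∑ S ∈ threeSubsets n, m S)) *
        (∏ S ∈ threeSubsets n, DeltaS x y p q S ^ m S) ∧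
    ∀ k : ℤ, (∀ i : Fin n, (∑ S ∈ (threeSubsets n).filter (fun S => i ∈ S), m S) = k) →
      Matrix.det !![a1, a2, a3; b1, b2, b3; c1, c2, c3] ^ (∑ S ∈ threeSubsets n, m S) *
          (∏ S ∈ threeSubsets n, DeltaS xt yt pt qt S ^ m S)
        = (∏ i : Fin n, (c1 * x i + c2 * y i + c3) ^ k) *
          (∏ S ∈ threeSubsets n, DeltaS x y p q S ^ m S) := by
  classical
  set A := !![a1, a2, a3; b1, b2, b3; c1, c2, c3] with hAdef
  set h : Fin n → ℝ := fun i => c1 * x i + c2 * y i + c3 with hhdef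
  -- the transformed gradient lines
  have hrow : ∀ i, gradLine (xt i) (yt i) (pt i) (qt i)
      = h i • Matrix.vecMul (gradLine (x i) (y i) (p i) (q i)) A⁻¹ := fun i =>
    gradLine_transform a1 a2 a3 b1 b2 b3 c1 c2 c3 hD (x i) (y i) (p i) (q i)
      (xt i) (yt i) (pt i) (qt i) (hh i) (hxt i) (hyt i) (hpt i) (hqt i)
  -- key transformation for each Δ_S
  have key : ∀ S ∈ threeSubsets n, DeltaS xt yt pt qt S
      = (∏ i ∈ S, h i) * (Matrix.det A)⁻¹ * DeltaS x y p q S := by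
    intro S hS
    rw [threeSubsets, Finset.mem_filter] at hS
    have hS3 : S.card = 3 := hS.2
    set σ := S.orderIsoOfFin hS3 with hσ
    set L : Matrix (Fin 3) (Fin 3) ℝ := Matrix.of fun r : Fin 3 =>
      gradLine (x (σ r)) (y (σ r)) (p (σ r)) (q (σ r)) with hL
    have hDS : DeltaS x y p q S = Matrix.det L := by rw [DeltaS, dif_pos hS3]
    have hDS' : DeltaS xt yt pt qt S = Matrix.det (Matrix.of fun r : Fin 3 =>
        gradLine (xt (σ r)) (yt (σ r)) (pt (σ r)) (qt (σ r))) := by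
      rw [DeltaS, dif_pos hS3]
    rw [hDS', hDS]
    have hM : (Matrix.of fun r : Fin 3 =>
        gradLine (xt (σ r)) (yt (σ r)) (pt (σ r)) (qt (σ r)))
        = Matrix.of fun r j => h (σ r) * (L * A⁻¹) r j := by
      ext r j
      rw [Matrix.of_apply, Matrix.of_apply, hrow (σ r)]
      simp [Matrix.mul_apply, Matrix.vecMul, dotProduct, hL]
    rw [hM, Matrix.det_mul_column, Matrix.det_mul, Matrix.det_nonsing_inv,
      Ring.inverse_eq_inv']
    have hprodS : ∏ r : Fin 3, h (σ r) = ∏ i ∈ S, h i := by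
      rw [← Finset.prod_coe_sort S h]
      exact Fintype.prod_equiv σ.toEquiv _ _ (fun r => rfl)
    rw [hprodS]
    ring
  -- first conjunct
  have h1 : (∏ S ∈ threeSubsets n, DeltaS xt yt pt qt S ^ m S)
      = (∏ i : Fin n, h i ^
            (∑ S ∈ (threeSubsets n).filter (fun S => i ∈ S), m S)) *
        Matrix.det A ^ (-(∑ S ∈ threeSubsets n, m S)) *
        (∏ S ∈ threeSubsets n, DeltaS x y p q S ^ m S) := by
    have step1 : (∏ S ∈ threeSubsets n, DeltaS xt yt pt qt S ^ m S)
        = ∏ S ∈ threeSubsets n,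
            ((∏ i ∈ S, h i) ^ m S * ((Matrix.det A)⁻¹) ^ m S * DeltaS x y p q S ^ m S) :=
      Finset.prod_congr rfl fun S hS => by rw [key S hS, mul_zpow, mul_zpow]
    rw [step1, Finset.prod_mul_distrib, Finset.prod_mul_distrib]
    congr 1
    · congr 1
      · -- the h-factor
        have : ∀ S ∈ threeSubsets n, (∏ i ∈ S, h i) ^ m S = ∏ i ∈ S, h i ^ m S :=
          fun S _ => (Finset.prod_zpow h S (m S)).symm
        rw [Finset.prod_congr rfl this]
        rw [Finset.prod_comm' (t' := Finset.univ)
          (s' := fun i => (threeSubsets n).filter (fun S => i ∈ S))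
          (by intro S i; simp [Finset.mem_filter, and_comm])]
        exact Finset.prod_congr rfl fun i _ =>
          (zpow_sum₀' (h i) (hh i) _ m).symm
      · -- the det factor
        rw [← zpow_sum₀' (Matrix.det A)⁻¹ (inv_ne_zero hD) _ m, _root_.inv_zpow, ← _root_.zpow_neg]
  refine ⟨h1, ?_⟩
  intro k hk
  rw [h1]
  have hek : (∏ i : Fin n, h i ^
      (∑ S ∈ (threeSubsets n).filter (fun S => i ∈ S), m S)) = ∏ i : Fin n, h i ^ k :=
    Finset.prod_congr rfl fun i _ => by rw [hk i]
  rw [hek]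
  have hcancel : Matrix.det A ^ (∑ S ∈ threeSubsets n, m S) *
      Matrix.det A ^ (-(∑ S ∈ threeSubsets n, m S)) = 1 := by
    rw [← zpow_add₀ hD, add_neg_cancel, zpow_zero]
  calc Matrix.det A ^ (∑ S ∈ threeSubsets n, m S) *
        ((∏ i : Fin n, h i ^ k) * Matrix.det A ^ (-(∑ S ∈ threeSubsets n, m S)) *
          (∏ S ∈ threeSubsets n, DeltaS x y p q S ^ m S))
      = (Matrix.det A ^ (∑ S ∈ threeSubsets n, m S) *
          Matrix.det A ^ (-(∑ S ∈ threeSubsets n, m S))) *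
        ((∏ i : Fin n, h i ^ k) * (∏ S ∈ threeSubsets n, DeltaS x y p q S ^ m S)) := by
        ring
    _ = (∏ i : Fin n, h i ^ k) * (∏ S ∈ threeSubsets n, DeltaS x y p q S ^ m S) := by
        rw [hcancel, one_mul]
end
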